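/- Let H be a Hopf algebra over a commutative ring k, with comultiplication Δ(h) = Σ h₁⊗h₂, counit ε and antipode S, and let t ∈ H be a left integral, i.e. h·t = ε(h)t for all h ∈ H. Then R := Σ t₁ ⊗ S(t₂) = (I_H ⊗ S)(Δ(t)) ∈ H⊗H is H-central: (h⊗1)·R = R·(1⊗h) in H⊗H for all h ∈ H. Consequently R is a solution of the FS-equation R¹²R²³ = R²³R¹³ = R¹³R¹² in H⊗H⊗H, and hence of the braid equation R¹²R²³R¹² = R²³R¹²R²³. -/

import Mathlib

/-!
For a coalgebra `C` and an algebra `A`, the operator `fusion f : c ⊗ a ↦ Σ c₁ ⊗ f(c₂) a` turns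
convolution into composition. For a Hopf algebra `H` the Galois map `Φ = fusion id`,
`x ⊗ y ↦ Δ(x)(1 ⊗ y)`, is therefore invertible with inverse `Ψ = fusion S`, and `R = Ψ(t ⊗ 1)`.
As `Δ` is multiplicative, `Φ((h ⊗ 1)R) = Δ(h)(t ⊗ 1)`, which is `t ⊗ h` because `t` is a left
integral; applying `Ψ` gives `(h ⊗ 1)R = Ψ(t ⊗ h) = R(1 ⊗ h)`.

Centrality slides `h ⊗ 1` through `R` as `1 ⊗ h`; this turns `R¹²R²³` into `R²³R¹³` and `R¹³R¹²`
into `R¹²R²³`, and the braid equation follows formally from the FS equation.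
-/

open TensorProduct

variable {k H : Type*} [CommRing k] [Ring H] [HopfAlgebra k H]

/-- The map `H ⊗ H → H ⊗ H ⊗ H`, `x ⊗ y ↦ x ⊗ y ⊗ 1`. -/
noncomputable def leg12 : H ⊗[k] H →ₐ[k] H ⊗[k] (H ⊗[k] H) :=
  Algebra.TensorProduct.map (AlgHom.id k H) Algebra.TensorProduct.includeLeft

/-- The map `H ⊗ H → H ⊗ H ⊗ H`, `x ⊗ y ↦ x ⊗ 1 ⊗ y`. -/
noncomputable def leg13 : H ⊗[k] H →ₐ[k] H ⊗[k] (H ⊗[k] H) :=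
  Algebra.TensorProduct.map (AlgHom.id k H) Algebra.TensorProduct.includeRight

/-- The map `H ⊗ H → H ⊗ H ⊗ H`, `x ⊗ y ↦ 1 ⊗ x ⊗ y`. -/
noncomputable def leg23 : H ⊗[k] H →ₐ[k] H ⊗[k] (H ⊗[k] H) :=
  Algebra.TensorProduct.includeRight

open Coalgebra WithConv LinearMap

section Fusion

variable {R C A : Type*} [CommSemiring R] [AddCommMonoid C] [Module R C] [Coalgebra R C]
  [Semiring A] [Algebra R A]

noncomputable def fusion (f : WithConv (C →ₗ[R] A)) : C ⊗[R] A →ₗ[R] C ⊗[R] A :=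
  lTensor C (mul' R A ∘ₗ rTensor A f.ofConv) ∘ₗ (TensorProduct.assoc R C C A).toLinearMap ∘ₗ
    rTensor A comul

lemma fusion_tmul (f : WithConv (C →ₗ[R] A)) (c : C) (a : A) :
    fusion f (c ⊗ₜ a) = lTensor C (mulRight R a ∘ₗ f.ofConv) (comul c) := by
  simp only [fusion, comp_apply, rTensor_tmul, LinearEquiv.coe_coe]
  induction comul (R := R) c using TensorProduct.induction_on with
  | zero => simp
  | tmul x y => simp
  | add x y hx hy => simp [add_tmul, hx, hy]

lemma fusion_comp_lTensor (f : WithConv (C →ₗ[R] A)) (g : C →ₗ[R] A) :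
    fusion f ∘ₗ lTensor C g =
      lTensor C (mul' R A ∘ₗ map f.ofConv g) ∘ₗ (TensorProduct.assoc R C C C).toLinearMap ∘ₗ
        rTensor C comul := by
  refine TensorProduct.ext' fun c c' ↦ ?_
  simp only [comp_apply, lTensor_tmul, fusion_tmul, rTensor_tmul, LinearEquiv.coe_coe]
  induction comul (R := R) c using TensorProduct.induction_on with
  | zero => simp
  | tmul x y => simp
  | add x y hx hy => simp [add_tmul, hx, hy]

lemma fusion_mul (f g : WithConv (C →ₗ[R] A)) : fusion (f * g) = fusion f ∘ₗ fusion g := by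
  refine TensorProduct.ext' fun c a ↦ ?_
  have hmul : mulRight R a ∘ₗ mul' R A ∘ₗ map f.ofConv g.ofConv =
      mul' R A ∘ₗ map f.ofConv (mulRight R a ∘ₗ g.ofConv) := by
    ext x y
    simp [mul_assoc]
  calc fusion (f * g) (c ⊗ₜ a)
      = lTensor C ((mul' R A ∘ₗ map f.ofConv (mulRight R a ∘ₗ g.ofConv)) ∘ₗ comul) (comul c) := by
        rw [fusion_tmul, ← hmul]; rfl
    _ = fusion f (lTensor C (mulRight R a ∘ₗ g.ofConv) (comul c)) := by
        rw [← comp_apply (fusion f), fusion_comp_lTensor, comp_apply, comp_apply,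
          LinearEquiv.coe_coe, coassoc_apply, lTensor_comp, comp_apply]
    _ = (fusion f ∘ₗ fusion g) (c ⊗ₜ a) := by rw [comp_apply, fusion_tmul]

lemma fusion_one : fusion (1 : WithConv (C →ₗ[R] A)) = LinearMap.id := by
  refine TensorProduct.ext' fun c a ↦ ?_
  have h : mulRight R a ∘ₗ (1 : WithConv (C →ₗ[R] A)).ofConv = toSpanSingleton R A a ∘ₗ counit := by
    ext x
    simp [Algebra.smul_def]
  rw [fusion_tmul, h, lTensor_comp, comp_apply, lTensor_counit_comul]
  simp

end Fusion

lemma lTensor_mulRight_apply {R A B : Type*} [CommSemiring R] [Semiring A] [Algebra R A]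
    [Semiring B] [Algebra R B] (b : B) (w : A ⊗[R] B) :
    lTensor A (mulRight R b) w = w * (1 ⊗ₜ b) := by
  induction w using TensorProduct.induction_on with
  | zero => simp
  | tmul x y => simp
  | add x y hx hy => simp [hx, hy, add_mul]

lemma rTensor_mulRight_apply {R A B : Type*} [CommSemiring R] [Semiring A] [Algebra R A]
    [Semiring B] [Algebra R B] (a : A) (w : A ⊗[R] B) :
    rTensor B (mulRight R a) w = w * (a ⊗ₜ 1) := by
  induction w using TensorProduct.induction_on with
  | zero => simp
  | tmul x y => simp
  | add x y hx hy => simp [hx, hy, add_mul]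

section Bialgebra

variable {R A : Type*} [CommSemiring R] [Semiring A] [Bialgebra R A]

lemma fusion_id_tmul_one_mul (a : A) (z : A ⊗[R] A) :
    fusion (toConv LinearMap.id) ((a ⊗ₜ 1) * z) = comul a * fusion (toConv LinearMap.id) z := by
  induction z using TensorProduct.induction_on with
  | zero => simp
  | tmul x y =>
    simp only [Algebra.TensorProduct.tmul_mul_tmul, one_mul, fusion_tmul, comp_id,
      lTensor_mulRight_apply, Bialgebra.comul_mul, mul_assoc]
  | add x y hx hy => simp [mul_add, hx, hy]

lemma comul_mul_tmul_one_of_left_integral {t : A} (ht : ∀ h : A, h * t = counit (R := R) h • t)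
    (h : A) : comul (R := R) h * (t ⊗ₜ 1) = t ⊗ₜ h := by
  have hmul : mulRight R t = toSpanSingleton R A t ∘ₗ counit := by
    ext x
    simp [ht]
  rw [← rTensor_mulRight_apply, hmul, rTensor_comp, comp_apply, rTensor_counit_comul]
  simp

end Bialgebra

section HopfAlgebra

open HopfAlgebra

variable {R A : Type*} [CommSemiring R] [Semiring A] [HopfAlgebra R A]

lemma fusion_id_fusion_antipode (z : A ⊗[R] A) :
    fusion (toConv LinearMap.id) (fusion (toConv (antipode R)) z) = z := by
  rw [← comp_apply (fusion _), ← fusion_mul, id_mul_antipode, fusion_one, id_apply]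

lemma fusion_antipode_fusion_id (z : A ⊗[R] A) :
    fusion (toConv (antipode R)) (fusion (toConv LinearMap.id) z) = z := by
  rw [← comp_apply (fusion _), ← fusion_mul, antipode_mul_id, fusion_one, id_apply]

theorem tmul_one_mul_lTensor_antipode_comul_of_left_integral {t : A}
    (ht : ∀ h : A, h * t = counit (R := R) h • t) (h : A) :
    (h ⊗ₜ 1) * lTensor A (antipode R) (comul t) = lTensor A (antipode R) (comul t) * (1 ⊗ₜ h) := by
  set Φ := fusion (R := R) (toConv (LinearMap.id : A →ₗ[R] A))
  set Ψ := fusion (toConv (antipode R (A := A)))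
  have hΨ : Ψ (t ⊗ₜ 1) = lTensor A (antipode R) (comul t) := by
    rw [fusion_tmul, mulRight_one, id_comp, ofConv_toConv]
  calc (h ⊗ₜ 1) * lTensor A (antipode R) (comul t)
      = Ψ (Φ ((h ⊗ₜ 1) * lTensor A (antipode R) (comul t))) := (fusion_antipode_fusion_id _).symm
    _ = Ψ (comul h * (t ⊗ₜ 1)) := by rw [fusion_id_tmul_one_mul, ← hΨ, fusion_id_fusion_antipode]
    _ = Ψ (t ⊗ₜ h) := by rw [comul_mul_tmul_one_of_left_integral ht]
    _ = lTensor A (antipode R) (comul t) * (1 ⊗ₜ h) := by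
        rw [fusion_tmul, lTensor_comp, comp_apply, lTensor_mulRight_apply, ofConv_toConv]

end HopfAlgebra

lemma leg12_tmul (x y : H) : leg12 (x ⊗ₜ[k] y) = x ⊗ₜ (y ⊗ₜ 1) := rfl

lemma leg13_tmul (x y : H) : leg13 (x ⊗ₜ[k] y) = x ⊗ₜ (1 ⊗ₜ y) := rfl

lemma leg23_apply (w : H ⊗[k] H) : leg23 w = 1 ⊗ₜ w := rfl

lemma leg12_apply_eq_assoc (w : H ⊗[k] H) :
    leg12 w = Algebra.TensorProduct.assoc k k k H H H (w ⊗ₜ 1) := by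
  induction w using TensorProduct.induction_on with
  | zero => simp
  | tmul x y => rfl
  | add x y hx hy => simp [hx, hy, add_tmul]

lemma leg12_mul_leg23_of_central {R : H ⊗[k] H} (hR : ∀ h : H, (h ⊗ₜ 1) * R = R * (1 ⊗ₜ h))
    (x : H ⊗[k] H) : leg12 x * leg23 R = leg23 R * leg13 x := by
  induction x using TensorProduct.induction_on with
  | zero => simp
  | tmul a b =>
    simp only [leg12_tmul, leg13_tmul, leg23_apply, Algebra.TensorProduct.tmul_mul_tmul, one_mul,
      mul_one, hR]
  | add x y hx hy => simp only [map_add, add_mul, mul_add, hx, hy]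

lemma leg13_mul_leg12_of_central {R : H ⊗[k] H} (hR : ∀ h : H, (h ⊗ₜ 1) * R = R * (1 ⊗ₜ h))
    (x : H ⊗[k] H) : leg13 x * leg12 R = leg12 R * leg23 x := by
  induction x using TensorProduct.induction_on with
  | zero => simp
  | tmul a b =>
    have h13 : leg13 (a ⊗ₜ[k] b) = Algebra.TensorProduct.assoc k k k H H H ((a ⊗ₜ 1) ⊗ₜ b) := rfl
    have h23 : leg23 (a ⊗ₜ[k] b) = Algebra.TensorProduct.assoc k k k H H H ((1 ⊗ₜ a) ⊗ₜ b) := rfl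
    rw [h13, h23, leg12_apply_eq_assoc, ← map_mul, ← map_mul, Algebra.TensorProduct.tmul_mul_tmul,
      Algebra.TensorProduct.tmul_mul_tmul, hR, one_mul, mul_one]
  | add x y hx hy => simp only [map_add, add_mul, mul_add, hx, hy]

lemma braid_of_fs {M : Type*} [Semigroup M] {a b c : M} (h₁ : a * b = b * c) (h₂ : b * c = c * a) :
    a * b * a = b * a * b := by
  rw [h₁, mul_assoc, ← h₂, ← h₁, mul_assoc]

/-- If `t` is a left integral in a Hopf algebra `H`, then
`R = Σ t₁ ⊗ S(t₂)` is `H`-central, hence a solution of the FS-equation, and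
hence of the braid equation. -/
theorem integral_gives_central_element (t : H)
    (ht : ∀ h : H, h * t = (Coalgebra.counit (R := k) h) • t) :
    ∀ R : H ⊗[k] H,
      R = (TensorProduct.map LinearMap.id (HopfAlgebra.antipode (R := k)))
            (Coalgebra.comul (R := k) t) →
      (∀ h : H, (h ⊗ₜ[k] (1 : H)) * R = R * ((1 : H) ⊗ₜ[k] h)) ∧
      (leg12 R * leg23 R = leg23 R * leg13 R ∧
        leg23 R * leg13 R = leg13 R * leg12 R) ∧
      (leg12 R * leg23 R * leg12 R = leg23 R * leg12 R * leg23 R) := by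
  intro R hRt
  have hR : ∀ h : H, (h ⊗ₜ 1) * R = R * (1 ⊗ₜ h) := by
    subst hRt
    exact tmul_one_mul_lTensor_antipode_comul_of_left_integral ht
  have fs₁ := leg12_mul_leg23_of_central hR R
  have fs₂ : leg23 R * leg13 R = leg13 R * leg12 R := by
    rw [← fs₁, leg13_mul_leg12_of_central hR]
  exact ⟨hR, ⟨fs₁, fs₂⟩, braid_of_fs fs₁ fs₂⟩
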